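/- Let k be a field of characteristic p > 0 with [k : k^p] finite, R a finitely generated ℕ-graded k-algebra, I a homogeneous ideal with R/I of finite length, M a finitely generated ℤ-graded R-module, and fix nonnegative integers d, m and a complex number y. Let R^{p^m} = {r^{p^m} : r ∈ R} with its grading as a graded subring of R, a finitely generated ℕ-graded k^{p^m}-algebra, and let I·R^{p^m} be the image of I under the p^m-th power map. Then for every n, F_n(M, R^{p^m}, I·R^{p^m}, d)(y/p^m) = p^{md}·[k : k^{p^m}]·F_{n+m}(M, R, I, d)(y), where in the left-hand side graded pieces are measured by dimension over k^{p^m}; consequently (F_n(M,R,I,d)(y))_n converges if and only if (F_n(M,R^{p^m},I·R^{p^m},d)(y/p^m))_n converges, and in that case F(M,R,I,d)(y) = (1/(p^{md}[k : k^{p^m}]))·F(M,R^{p^m},I·R^{p^m},d)(y/p^m). -/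

import Mathlib

open Filter Complex

set_option synthInstance.maxHeartbeats 1000000
set_option maxHeartbeats 1000000

noncomputable section

/-- The Frobenius bracket power `I^{[q]}` of an ideal. -/
def bracketPow {R : Type*} [CommSemiring R] (I : Ideal R) (q : ℕ) : Ideal R :=
  Ideal.span ((fun x : R => x ^ q) '' (I : Set R))

/-- `F_n(M,R,I,d)(y)`, graded pieces measured over `k`. -/
def FnGen (k : Type*) {R M : Type*} [Field k] [CommRing R] [Algebra k R]
    [AddCommGroup M] [Module R M] [Module k M] [IsScalarTower k R M]
    (ℳ : ℤ → Submodule k M) (I : Ideal R) (p d n : ℕ) (y : ℂ) : ℂ :=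
  (1 / (p : ℂ) ^ n) ^ d *
    ∑' j : ℤ, (Module.finrank k ((ℳ j).map
        ((bracketPow I (p ^ n) • ⊤ : Submodule R M).mkQ.restrictScalars k)) : ℂ) *
      Complex.exp (-Complex.I * y * (j : ℂ) / (p : ℂ) ^ n)

section
variable (k R : Type*) [Field k] [CommRing R] [Algebra k R]
  (p m : ℕ) [ExpChar k p] [ExpChar R p]

/-- The subfield `k^{p^m} ⊆ k`. -/
def kPow : Subfield k := (iterateFrobenius k p m).fieldRange

/-- The subring `R^{p^m} ⊆ R`. -/
def rPow : Subring R := (iterateFrobenius R p m).range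

/-- The structure map `k^{p^m} → R^{p^m}`, the restriction of `algebraMap k R`. -/
def kPowToRPow : kPow k p m →+* rPow R p m :=
  RingHom.codRestrict ((algebraMap k R).comp (kPow k p m).subtype) (rPow R p m)
    (fun c => by
      obtain ⟨a, ha⟩ := c.2
      exact ⟨algebraMap k R a, by
        simp only [iterateFrobenius_def] at ha ⊢
        simp [← ha, map_pow]⟩)

/-- `R^{p^m}` as a `k^{p^m}`-algebra. -/
def algebraKPowRPow : Algebra (kPow k p m) (rPow R p m) := (kPowToRPow k R p m).toAlgebra

variable (M : Type*) [AddCommGroup M] [Module R M] [Module k M] [IsScalarTower k R M]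

theorem towerKPowRPow :
    letI := algebraKPowRPow k R p m
    IsScalarTower (kPow k p m) (rPow R p m) M := by
  letI := algebraKPowRPow k R p m
  refine ⟨fun c s x => ?_⟩
  show (((kPowToRPow k R p m c) * s : rPow R p m) : R) • x = (c : k) • ((s : R) • x)
  push_cast
  rw [mul_smul, ← IsScalarTower.algebraMap_smul R (c : k) ((s : R) • x)]
  rfl

end

/-- `F_n(M, R^{p^m}, I·R^{p^m}, d)(y')`: the Frobenius–Poincaré approximant of the triple
`(M, R^{p^m}, I·R^{p^m})`, with graded pieces measured over the subfield `k^{p^m}` and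
`I·R^{p^m}` the image of `I` under the `p^m`-th power map. -/
def FnPow (k R M : Type*) [Field k] [CommRing R] [Algebra k R]
    [AddCommGroup M] [Module R M] [Module k M] [IsScalarTower k R M]
    (p : ℕ) [ExpChar k p] [ExpChar R p] (m : ℕ)
    (ℳ : ℤ → Submodule k M) (I : Ideal R) (d n : ℕ) (y' : ℂ) : ℂ :=
  letI := algebraKPowRPow k R p m
  haveI := towerKPowRPow k R p m M
  let IS : Ideal (rPow R p m) := I.map (iterateFrobenius R p m).rangeRestrict
  (1 / (p : ℂ) ^ n) ^ d *
    ∑' j : ℤ, (Module.finrank (kPow k p m)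
        ((Submodule.restrictScalars (kPow k p m) (ℳ j)).map
          ((Submodule.mkQ
            ((bracketPow IS (p ^ n) • ⊤ :
              Submodule (rPow R p m) M))).restrictScalars (kPow k p m))) : ℂ) *
      Complex.exp (-Complex.I * y' * (j : ℂ) / (p : ℂ) ^ n)

lemma mem_bracketPow_smul_top_iff {R M : Type*} [CommRing R] [AddCommGroup M] [Module R M]
    (p : ℕ) [Fact p.Prime] [CharP R p] [ExpChar R p] (m n : ℕ) (I : Ideal R) (x : M) :
    x ∈ (bracketPow (R := rPow R p m) (I.map (iterateFrobenius R p m).rangeRestrict) (p ^ n) •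
        (⊤ : Submodule (rPow R p m) M)) ↔
      x ∈ (bracketPow I (p ^ (n + m)) • (⊤ : Submodule R M)) := by
  have hpow : ∀ z : R, (z ^ p ^ m) ^ p ^ n = z ^ p ^ (n + m) := by
    intro z
    rw [← pow_mul, ← pow_add, Nat.add_comm m n]
  constructor
  · intro hx
    have key : ∀ ρ ∈ bracketPow (R := rPow R p m) (I.map (iterateFrobenius R p m).rangeRestrict) (p ^ n),
        ∀ v : M, ρ • v ∈ (bracketPow I (p ^ (n + m)) • (⊤ : Submodule R M)) := by
      intro ρ hρ
      induction hρ using Submodule.span_induction with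
      | mem ξq hξq =>
          obtain ⟨ξ, hξ, rfl⟩ := hξq
          obtain ⟨z, hz, rfl⟩ := (Ideal.mem_map_iff_of_surjective _
            (iterateFrobenius R p m).rangeRestrict_surjective).1 hξ
          intro v
          have hcoe : ((((iterateFrobenius R p m).rangeRestrict z) ^ p ^ n : rPow R p m) : R)
              = z ^ p ^ (n + m) := by
            push_cast
            rw [RingHom.coe_rangeRestrict, iterateFrobenius_def, hpow]
          have hmem : z ^ p ^ (n + m) ∈ bracketPow I (p ^ (n + m)) :=
            Ideal.subset_span ⟨z, hz, rfl⟩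
          have : (((iterateFrobenius R p m).rangeRestrict z ^ p ^ n : rPow R p m)) • v
              = (z ^ p ^ (n + m)) • v := by
            show ((((iterateFrobenius R p m).rangeRestrict z) ^ p ^ n : rPow R p m) : R) • v = _
            rw [hcoe]
          show (((iterateFrobenius R p m).rangeRestrict z ^ p ^ n : rPow R p m)) • v ∈ _
          rw [this]
          exact Submodule.smul_mem_smul hmem trivial
      | zero => intro v; rw [zero_smul]; exact Submodule.zero_mem _
      | add a b _ _ iha ihb =>
          intro v; rw [add_smul]; exact Submodule.add_mem _ (iha v) (ihb v)
      | smul s ρ _ ih =>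
          intro v
          rw [smul_eq_mul, mul_comm, mul_smul]
          exact ih _
    exact Submodule.smul_induction_on (p := fun y => y ∈ (bracketPow I (p ^ (n + m)) • (⊤ : Submodule R M))) hx (fun r hr v _ => key r hr v)
      (fun a b ha hb => Submodule.add_mem _ ha hb)
  · intro hx
    have key : ∀ r ∈ bracketPow I (p ^ (n + m)), ∀ v : M,
        r • v ∈ (bracketPow (R := rPow R p m) (I.map (iterateFrobenius R p m).rangeRestrict) (p ^ n) •
          (⊤ : Submodule (rPow R p m) M)) := by
      intro r hr
      induction hr using Submodule.span_induction with
      | mem zq hzq =>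
          obtain ⟨z, hz, rfl⟩ := hzq
          intro v
          have hξ : (iterateFrobenius R p m).rangeRestrict z ∈
              I.map (iterateFrobenius R p m).rangeRestrict := Ideal.mem_map_of_mem _ hz
          have hmem : ((iterateFrobenius R p m).rangeRestrict z) ^ p ^ n ∈
              bracketPow (R := rPow R p m) (I.map (iterateFrobenius R p m).rangeRestrict) (p ^ n) :=
            Ideal.subset_span ⟨_, hξ, rfl⟩
          have : (z ^ p ^ (n + m) : R) • v
              = (((iterateFrobenius R p m).rangeRestrict z) ^ p ^ n
                  : rPow R p m) • v := by
            show _ = ((((iterateFrobenius R p m).rangeRestrict z) ^ p ^ n : rPow R p m) : R) • v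
            push_cast
            rw [RingHom.coe_rangeRestrict, iterateFrobenius_def, hpow]
          rw [this]
          exact Submodule.smul_mem_smul hmem trivial
      | zero => intro v; rw [zero_smul]; exact Submodule.zero_mem _
      | add a b _ _ iha ihb =>
          intro v; rw [add_smul]; exact Submodule.add_mem _ (iha v) (ihb v)
      | smul s ρ _ ih =>
          intro v
          rw [smul_eq_mul, mul_comm, mul_smul]
          exact ih _
    exact Submodule.smul_induction_on (p := fun y => y ∈ (bracketPow (R := rPow R p m) (I.map (iterateFrobenius R p m).rangeRestrict) (p ^ n) • (⊤ : Submodule (rPow R p m) M))) hx (fun r hr v _ => key r hr v)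
      (fun a b ha hb => Submodule.add_mem _ ha hb)


lemma subfield_step (k : Type*) [Field k] (p : ℕ) [Fact p.Prime] [CharP k p]
    (K1 Km K' : Subfield k)
    (hpow : ∀ c : k, c ∈ K1 → ∃ w : k, w ^ p = c)
    (hK' : ∀ c : k, c ∈ Km → c ^ p ∈ K')
    (hfin1 : Module.Finite K1 k) (hfinm : Module.Finite Km k) :
    Module.Finite K' k := by
  classical
  obtain ⟨S, hS⟩ := hfin1.fg_top
  obtain ⟨T, hT⟩ := hfinm.fg_top
  set P : Set k := (fun t => t ^ p) '' ↑T with hP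
  set S' : Finset k := (S ×ˢ T).image (fun st : k × k => st.2 ^ p * st.1) with hS'
  have hA : ∀ y : k, y ^ p ∈ Submodule.span K' P := by
    intro y
    have hy : y ∈ Submodule.span Km (↑T : Set k) := by rw [hT]; trivial
    induction hy using Submodule.span_induction with
    | mem t ht => exact Submodule.subset_span ⟨t, ht, rfl⟩
    | zero =>
        rw [zero_pow (Nat.Prime.ne_zero Fact.out)]
        exact Submodule.zero_mem _
    | add a b _ _ iha ihb =>
        rw [add_pow_char]
        exact Submodule.add_mem _ iha ihb
    | smul c a _ ihy =>
        have hc : ((c : k)) ^ p ∈ K' := hK' _ c.2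
        have hrw : ((c • a) ^ p) = (⟨(c : k) ^ p, hc⟩ : K') • a ^ p := by
          show ((c : k) * a) ^ p = (c : k) ^ p * a ^ p
          rw [mul_pow]
        rw [hrw]
        exact Submodule.smul_mem _ _ ihy
  have hmul : ∀ s ∈ S, ∀ z, z ∈ Submodule.span K' P →
      z * s ∈ Submodule.span K' (↑S' : Set k) := by
    intro s hs z hz
    induction hz using Submodule.span_induction with
    | mem z hzP =>
        obtain ⟨t, ht, rfl⟩ := hzP
        refine Submodule.subset_span ?_
        simp only [hS', Finset.coe_image, Set.mem_image, Finset.mem_coe, Finset.mem_product]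
        exact ⟨(s, t), ⟨hs, ht⟩, rfl⟩
    | zero => rw [zero_mul]; exact Submodule.zero_mem _
    | add a b _ _ iha ihb => rw [add_mul]; exact Submodule.add_mem _ iha ihb
    | smul c a _ ihz => rw [smul_mul_assoc]; exact Submodule.smul_mem _ _ ihz
  have hclose : ∀ w : k, ∀ a, a ∈ Submodule.span K' (↑S' : Set k) →
      w ^ p * a ∈ Submodule.span K' (↑S' : Set k) := by
    intro w a ha
    induction ha using Submodule.span_induction with
    | mem z hz =>
        simp only [hS', Finset.coe_image, Set.mem_image, Finset.mem_coe,
          Finset.mem_product] at hz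
        obtain ⟨⟨s, t⟩, ⟨hs, ht⟩, rfl⟩ := hz
        have hrw : w ^ p * (t ^ p * s) = (w * t) ^ p * s := by
          rw [mul_pow]; ring
        rw [hrw]
        exact hmul s hs _ (hA (w * t))
    | zero => rw [mul_zero]; exact Submodule.zero_mem _
    | add a b _ _ iha ihb => rw [mul_add]; exact Submodule.add_mem _ iha ihb
    | smul c a _ iha => rw [mul_smul_comm]; exact Submodule.smul_mem _ _ iha
  refine ⟨⟨S', ?_⟩⟩
  rw [eq_top_iff]
  intro x hxtop
  clear hxtop
  have hx : x ∈ Submodule.span K1 (↑S : Set k) := by rw [hS]; trivial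
  induction hx using Submodule.span_induction with
  | mem s hs =>
      have h1 : (s : k) = 1 ^ p * s := by rw [one_pow, one_mul]
      rw [h1]
      exact hmul s hs _ (hA 1)
  | zero => exact Submodule.zero_mem _
  | add a b _ _ iha ihb => exact Submodule.add_mem _ iha ihb
  | smul c a _ iha =>
      obtain ⟨w, hw⟩ := hpow _ c.2
      have hrw : c • a = w ^ p * a := by
        show (c : k) * a = _
        rw [hw]
      rw [hrw]
      exact hclose w a iha

lemma kPow_finite (k : Type*) [Field k] (p : ℕ) [Fact p.Prime] [CharP k p] [ExpChar k p]
    (hk : Module.Finite (kPow k p 1) k) (m : ℕ) : Module.Finite (kPow k p m) k := by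
  induction m with
  | zero =>
      refine ⟨⟨{1}, ?_⟩⟩
      rw [eq_top_iff]
      intro x _
      have hx : x ∈ kPow k p 0 := ⟨x, by simp [iterateFrobenius_def]⟩
      have hx1 : x = (⟨x, hx⟩ : kPow k p 0) • (1 : k) := by
        show x = x * 1
        rw [mul_one]
      rw [hx1]
      exact Submodule.smul_mem _ _ (Submodule.subset_span (by simp))
  | succ m ih =>
      refine subfield_step k p (kPow k p 1) (kPow k p m) _ ?_ ?_ hk ih
      · rintro c ⟨w, rfl⟩
        exact ⟨w, by rw [iterateFrobenius_def, pow_one]⟩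
      · rintro c ⟨w, rfl⟩
        refine ⟨w, ?_⟩
        rw [iterateFrobenius_def, iterateFrobenius_def, ← pow_mul, pow_succ]



lemma finrank_map_mkQ_eq
    (k R M : Type*) [Field k] [CommRing R] [Algebra k R]
    [AddCommGroup M] [Module R M] [Module k M] [IsScalarTower k R M]
    (p : ℕ) [Fact p.Prime] [CharP k p] [CharP R p] [ExpChar k p] [ExpChar R p] (m : ℕ)
    (N' : Submodule (rPow R p m) M) (N : Submodule R M)
    (hNN' : ∀ x : M, x ∈ N' ↔ x ∈ N)
    (W : Submodule k M) :
    letI := algebraKPowRPow k R p m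
    haveI := towerKPowRPow k R p m M
    Module.finrank (kPow k p m)
        ((Submodule.restrictScalars (kPow k p m) W).map
          ((Submodule.mkQ N').restrictScalars (kPow k p m)))
      = Module.finrank (kPow k p m) k *
        Module.finrank k (W.map ((Submodule.mkQ N).restrictScalars k)) := by
  letI := algebraKPowRPow k R p m
  haveI := towerKPowRPow k R p m M
  let e : (M ⧸ N') ≃ₗ[kPow k p m] (M ⧸ N) :=
    { toFun := fun x => Quotient.liftOn' x (fun v => Submodule.Quotient.mk v)
        (fun a b hab => (Submodule.Quotient.eq N).2
          ((hNN' _).1 ((Submodule.quotientRel_def N').1 hab)))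
      invFun := fun x => Quotient.liftOn' x (fun v => Submodule.Quotient.mk v)
        (fun a b hab => (Submodule.Quotient.eq N').2
          ((hNN' _).2 ((Submodule.quotientRel_def N).1 hab)))
      left_inv := fun x => Quotient.inductionOn' x fun v => rfl
      right_inv := fun x => Quotient.inductionOn' x fun v => rfl
      map_add' := fun x y => Quotient.inductionOn₂' x y fun a b => rfl
      map_smul' := fun c x => Quotient.inductionOn' x fun v => rfl }
  have himage : Submodule.map (e : (M ⧸ N') →ₗ[kPow k p m] (M ⧸ N))
      ((Submodule.restrictScalars (kPow k p m) W).map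
        ((Submodule.mkQ N').restrictScalars (kPow k p m)))
      = Submodule.restrictScalars (kPow k p m)
          (W.map ((Submodule.mkQ N).restrictScalars k)) := by
    ext x
    simp only [Submodule.mem_map, Submodule.restrictScalars_mem,
      LinearMap.coe_restrictScalars, Submodule.mkQ_apply]
    constructor
    · rintro ⟨_, ⟨v, hv, rfl⟩, rfl⟩
      exact ⟨v, hv, rfl⟩
    · rintro ⟨v, hv, rfl⟩
      exact ⟨Submodule.Quotient.mk v, ⟨v, hv, rfl⟩, rfl⟩
  calc Module.finrank (kPow k p m)
        ((Submodule.restrictScalars (kPow k p m) W).map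
          ((Submodule.mkQ N').restrictScalars (kPow k p m)))
      = Module.finrank (kPow k p m)
          (Submodule.map (e : (M ⧸ N') →ₗ[kPow k p m] (M ⧸ N))
            ((Submodule.restrictScalars (kPow k p m) W).map
              ((Submodule.mkQ N').restrictScalars (kPow k p m)))) :=
        (LinearEquiv.finrank_map_eq e _).symm
    _ = Module.finrank (kPow k p m)
          (Submodule.restrictScalars (kPow k p m)
            (W.map ((Submodule.mkQ N).restrictScalars k))) := by rw [himage]; rfl
    _ = Module.finrank (kPow k p m)
          (W.map ((Submodule.mkQ N).restrictScalars k)) :=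
        LinearEquiv.finrank_eq ((Submodule.restrictScalarsEquiv (kPow k p m) k (M ⧸ N)
          (W.map ((Submodule.mkQ N).restrictScalars k))).restrictScalars (kPow k p m))
    _ = Module.finrank (kPow k p m) k *
          Module.finrank k (W.map ((Submodule.mkQ N).restrictScalars k)) :=
        (Module.finrank_mul_finrank (kPow k p m) k _).symm


/-- **Frobenius base change for Frobenius–Poincaré approximants.**  For a field `k` of
characteristic `p > 0` with `[k : k^p]` finite:
`F_n(M, R^{p^m}, I·R^{p^m}, d)(y/p^m) = p^{md}·[k : k^{p^m}]·F_{n+m}(M,R,I,d)(y)`;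
consequently `(F_n(M,R,I,d)(y))_n` converges iff
`(F_n(M,R^{p^m},I·R^{p^m},d)(y/p^m))_n` converges, and then
`F(M,R,I,d)(y) = (1/(p^{md}[k:k^{p^m}]))·F(M,R^{p^m},I·R^{p^m},d)(y/p^m)`. -/
theorem frobenius_poincare_base_change
    (k R M : Type) [Field k] [CommRing R] [Algebra k R] [Algebra.FiniteType k R]
    (p : ℕ) [Fact p.Prime] [CharP k p] [CharP R p]
    (hkfin : Module.Finite (kPow k p 1) k)
    (𝒜 : ℤ → Submodule k R) [GradedAlgebra 𝒜]
    (h𝒜neg : ∀ t : ℤ, t < 0 → 𝒜 t = ⊥)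
    (h𝒜zero : ∀ x ∈ 𝒜 0, ∃ c : k, algebraMap k R c = x)
    (I : Ideal R) (hI : Ideal.IsHomogeneous 𝒜 I) (hIfl : IsFiniteLength R (R ⧸ I))
    [AddCommGroup M] [Module R M] [Module k M] [IsScalarTower k R M] [Module.Finite R M]
    (ℳ : ℤ → Submodule k M) [DirectSum.Decomposition ℳ]
    (hℳ : ∀ (a b : ℤ), ∀ r ∈ 𝒜 a, ∀ x ∈ ℳ b, r • x ∈ ℳ (a + b))
    (d m : ℕ) (y : ℂ) :
    (∀ n : ℕ,
      FnPow k R M p m ℳ I d n (y / (p : ℂ) ^ m) =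
        (p : ℂ) ^ (m * d) * (Module.finrank (kPow k p m) k : ℂ) *
          FnGen k ℳ I p d (n + m) y) ∧
    ((∃ L : ℂ, Tendsto (fun n : ℕ => FnGen k ℳ I p d n y) atTop (nhds L)) ↔
      (∃ L' : ℂ,
        Tendsto (fun n : ℕ => FnPow k R M p m ℳ I d n (y / (p : ℂ) ^ m)) atTop (nhds L'))) ∧
    (∀ L L' : ℂ,
      Tendsto (fun n : ℕ => FnGen k ℳ I p d n y) atTop (nhds L) →
      Tendsto (fun n : ℕ => FnPow k R M p m ℳ I d n (y / (p : ℂ) ^ m)) atTop (nhds L') →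
      L = 1 / ((p : ℂ) ^ (m * d) * (Module.finrank (kPow k p m) k : ℂ)) * L') := by
  letI := algebraKPowRPow k R p m
  haveI := towerKPowRPow k R p m M
  haveI hfin : Module.Finite (kPow k p m) k := kPow_finite k p hkfin m
  have key : ∀ n : ℕ, FnPow k R M p m ℳ I d n (y / (p : ℂ) ^ m) =
      (p : ℂ) ^ (m * d) * (Module.finrank (kPow k p m) k : ℂ) *
        FnGen k ℳ I p d (n + m) y := by
    intro n
    have hp0 : (p : ℂ) ≠ 0 := Nat.cast_ne_zero.2 (Nat.Prime.ne_zero Fact.out)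
    have hNN' : ∀ x : M,
        x ∈ (bracketPow (R := rPow R p m)
            (Ideal.map (iterateFrobenius R p m).rangeRestrict I) (p ^ n) • ⊤ :
              Submodule (rPow R p m) M) ↔
          x ∈ (bracketPow I (p ^ (n + m)) • ⊤ : Submodule R M) :=
      mem_bracketPow_smul_top_iff p m n I
    have hj := fun j : ℤ => finrank_map_mkQ_eq k R M p m
      (bracketPow (R := rPow R p m)
        (Ideal.map (iterateFrobenius R p m).rangeRestrict I) (p ^ n) • ⊤)
      (bracketPow I (p ^ (n + m)) • ⊤) hNN' (ℳ j)
    have hexp : ∀ j : ℤ, Complex.exp (-Complex.I * (y / (p : ℂ) ^ m) * (j : ℂ) / (p : ℂ) ^ n)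
        = Complex.exp (-Complex.I * y * (j : ℂ) / (p : ℂ) ^ (n + m)) := by
      intro j
      have harg : -Complex.I * (y / (p : ℂ) ^ m) * (j : ℂ) / (p : ℂ) ^ n
          = -Complex.I * y * (j : ℂ) / (p : ℂ) ^ (n + m) := by
        rw [pow_add]
        ring
      rw [harg]
    have hpref : ((1 : ℂ) / (p : ℂ) ^ n) ^ d
        = (p : ℂ) ^ (m * d) * ((1 : ℂ) / (p : ℂ) ^ (n + m)) ^ d := by
      rw [one_div, one_div, inv_pow, inv_pow, ← pow_mul, ← pow_mul]
      have hnm : (n + m) * d = m * d + n * d := by ring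
      rw [hnm, pow_add, mul_inv, ← mul_assoc,
        mul_inv_cancel₀ (pow_ne_zero _ hp0), one_mul]
    have gen : ∀ F G : ℤ → ℂ,
        (∀ j, F j = ((Module.finrank (kPow k p m) k : ℂ)) * G j) →
        (1 / (p : ℂ) ^ n) ^ d * ∑' j : ℤ, F j
          = (p : ℂ) ^ (m * d) * (Module.finrank (kPow k p m) k : ℂ) *
            ((1 / (p : ℂ) ^ (n + m)) ^ d * ∑' j : ℤ, G j) := by
      intro F G hFG
      rw [tsum_congr hFG, tsum_mul_left, hpref]
      ring
    simp only [FnPow, FnGen]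
    refine gen _ _ (fun j => ?_)
    rw [hj j, hexp j]
    push_cast
    ring
  set C : ℂ := (p : ℂ) ^ (m * d) * (Module.finrank (kPow k p m) k : ℂ) with hCdef
  have hp0 : (p : ℂ) ≠ 0 := Nat.cast_ne_zero.2 (Nat.Prime.ne_zero Fact.out)
  have hC : C ≠ 0 := mul_ne_zero (pow_ne_zero _ hp0)
    (Nat.cast_ne_zero.2 (Module.finrank_pos (R := kPow k p m) (M := k)).ne')
  refine ⟨key, ⟨?_, ?_⟩, ?_⟩
  · rintro ⟨L, hL⟩
    refine ⟨C * L, ?_⟩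
    have h1 : Tendsto (fun n : ℕ => FnGen k ℳ I p d (n + m) y) atTop (nhds L) :=
      (Filter.tendsto_add_atTop_iff_nat m).2 hL
    exact (h1.const_mul C).congr (fun n => (key n).symm)
  · rintro ⟨L', hL'⟩
    refine ⟨C⁻¹ * L', ?_⟩
    have h1 : Tendsto (fun n : ℕ => C * FnGen k ℳ I p d (n + m) y) atTop (nhds L') :=
      hL'.congr (fun n => key n)
    have h3 : Tendsto (fun n : ℕ => FnGen k ℳ I p d (n + m) y) atTop (nhds (C⁻¹ * L')) :=
      (h1.const_mul C⁻¹).congr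
        (fun n => by rw [← mul_assoc, inv_mul_cancel₀ hC, one_mul])
    exact (Filter.tendsto_add_atTop_iff_nat m).1 h3
  · intro L L' hL hL'
    have h1 : Tendsto (fun n : ℕ => FnPow k R M p m ℳ I d n (y / (p : ℂ) ^ m)) atTop
        (nhds (C * L)) :=
      ((( Filter.tendsto_add_atTop_iff_nat m).2 hL).const_mul C).congr
        (fun n => (key n).symm)
    have hLL : L' = C * L := tendsto_nhds_unique hL' h1
    rw [hLL, one_div, ← mul_assoc, inv_mul_cancel₀ hC, one_mul]

end
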